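/- For every positive integer n, every real σ > 0, and complex s with Re(s) = σ, |(η(s)/s)·∑_{k=1}^n μ(k)/k^s − (1 − 2^(1−s))/s| ≤ (sup_{x ≥ n} |1 + f_n(x)|)/(σ·n^σ), where f_n(x) = ∑_{k=1}^n μ(k)·ν(x/k). -/

import Mathlib

open MeasureTheory

noncomputable def nu (x : ℝ) : ℝ := 2 * Int.fract (x / 2) - Int.fract x

noncomputable def fn (n : ℕ) (x : ℝ) : ℝ :=
  ∑ k ∈ Finset.Icc 1 n, (ArithmeticFunction.moebius k : ℝ) * nu (x / k)

noncomputable def eta (s : ℂ) : ℂ :=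
  ∑' k : ℕ, ((2 * ((k : ℂ) + 1) - 1) ^ (-s) - (2 * ((k : ℂ) + 1)) ^ (-s))

/-!
The Mellin transform of `ν` at `-s` is `η(s)/s`, since on `x ≥ 0` the function `ν` is the
indicator of `⋃ₖ [2k+1, 2k+2)`; by scaling and linearity that of `f_n` is
`(∑ μ(k) k^{-s}) η(s)/s`. On the other hand `ν(y) = ⌊y⌋ - 2⌊y/2⌋` and Möbius inversion,
`∑_{k ≤ x} μ(k) ⌊x/k⌋ = 1` for `x ≥ 1`, show that `f_n` vanishes on `(0, 1)`, equals `1` on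
`[1, 2)` and `-1` on `[2, n + 1)`. Evaluating the Mellin integral piecewise, the quantity in the
theorem is `∫_{n+1}^∞ (1 + f_n(x)) x^{-s-1} dx`, of norm at most
`sup_{x ≥ n} |1 + f_n(x)| · (n + 1)^{-σ} / σ`.
-/

open Finset Set ArithmeticFunction
open scoped ArithmeticFunction.Moebius

theorem sum_Ioc_moebius_mul_div {N : ℕ} (hN : N ≠ 0) :
    ∑ k ∈ Ioc 0 N, μ k * ((N / k : ℕ) : ℤ) = 1 := by
  rw [← sum_Ioc_mul_zeta_eq_sum, moebius_mul_coe_zeta]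
  simp [one_apply, Nat.one_le_iff_ne_zero.mpr hN]

theorem sum_Icc_moebius_mul_floor_div {n : ℕ} {x : ℝ} (hx : 1 ≤ x) (hxn : x < n + 1) :
    ∑ k ∈ Icc 1 n, μ k * ⌊x / k⌋ = 1 := by
  have hN1 : ⌊x⌋₊ ≠ 0 := Nat.one_le_iff_ne_zero.mp ((Nat.one_le_floor_iff x).mpr hx)
  have hNn : ⌊x⌋₊ ≤ n := Nat.lt_succ_iff.mp <| (Nat.floor_lt (by linarith)).mpr (by simpa)
  have hfloor (k : ℕ) : ⌊x / k⌋ = ((⌊x⌋₊ / k : ℕ) : ℤ) := by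
    rw [Int.floor_div_natCast, ← Int.natCast_floor_eq_floor (by linarith), Int.natCast_div]
  simp_rw [hfloor]
  rw [← sum_Ioc_moebius_mul_div hN1]
  refine (sum_subset (Ioc_subset_Ioc_right hNn) fun k hk hkN => ?_).symm
  simp only [Finset.mem_Ioc, not_and, not_le] at hk hkN
  simp [Nat.div_eq_of_lt (hkN hk.1)]

theorem sum_Icc_moebius_mul_floor_div_of_lt_one (n : ℕ) {x : ℝ} (hx0 : 0 ≤ x) (hx1 : x < 1) :
    ∑ k ∈ Icc 1 n, μ k * ⌊x / k⌋ = 0 := by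
  refine sum_eq_zero fun k hk => ?_
  have hk : (1 : ℝ) ≤ k := by exact_mod_cast (mem_Icc.mp hk).1
  rw [Int.floor_eq_zero_iff.mpr ⟨by positivity, (div_le_self hx0 hk).trans_lt hx1⟩, mul_zero]

theorem nu_eq_floor_sub (x : ℝ) : nu x = ⌊x⌋ - 2 * ⌊x / 2⌋ := by
  rw [nu, Int.fract, Int.fract]
  ring

theorem nu_eq_floor_emod_two (x : ℝ) : nu x = ((⌊x⌋ % 2 : ℤ) : ℝ) := by
  rw [nu_eq_floor_sub, Int.emod_def, ← Nat.cast_ofNat, Int.floor_div_natCast]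
  push_cast
  ring

theorem abs_nu_le_one (x : ℝ) : |nu x| ≤ 1 := by
  rw [nu_eq_floor_emod_two, abs_le]
  have h0 := Int.emod_nonneg ⌊x⌋ two_ne_zero
  have h1 := Int.emod_lt_of_pos ⌊x⌋ two_pos
  constructor <;> norm_cast <;> omega

theorem nu_eq_indicator {x : ℝ} (hx : 0 ≤ x) :
    nu x = (⋃ k : ℕ, Ico (2 * k + 1 : ℝ) (2 * k + 2)).indicator 1 x := by
  obtain ⟨N, hN⟩ : ∃ N : ℕ, ⌊x⌋ = N := ⟨⌊x⌋₊, (Int.natCast_floor_eq_floor hx).symm⟩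
  have hmem : x ∈ ⋃ k : ℕ, Ico (2 * k + 1 : ℝ) (2 * k + 2) ↔ ∃ k : ℕ, N = 2 * k + 1 := by
    simp only [mem_iUnion, Set.mem_Ico]
    refine exists_congr fun k => ?_
    rw [← Nat.cast_inj (R := ℤ), ← hN, Int.floor_eq_iff]
    push_cast
    constructor <;> rintro ⟨h1, h2⟩ <;> constructor <;> linarith
  rw [nu_eq_floor_emod_two, hN]
  by_cases h : x ∈ ⋃ k : ℕ, Ico (2 * k + 1 : ℝ) (2 * k + 2)
  · obtain ⟨k, rfl⟩ := hmem.mp h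
    rw [indicator_of_mem h]
    simp
  · have : N % 2 = 0 := by
      by_contra h'
      exact h (hmem.mpr ⟨N / 2, by omega⟩)
    rw [indicator_of_notMem h]
    exact_mod_cast this

theorem measurable_nu : Measurable nu := by
  unfold nu; fun_prop

theorem measurable_fn (n : ℕ) : Measurable (fn n) := by
  have := measurable_nu
  unfold fn; fun_prop

theorem fn_eq_floor_sums (n : ℕ) (x : ℝ) :
    fn n x = ((∑ k ∈ Icc 1 n, μ k * ⌊x / k⌋ - 2 * ∑ k ∈ Icc 1 n, μ k * ⌊x / 2 / k⌋ : ℤ) : ℝ) := by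
  push_cast
  rw [fn, mul_sum, ← sum_sub_distrib]
  refine sum_congr rfl fun k _ => ?_
  rw [nu_eq_floor_sub, div_right_comm x 2]
  ring

theorem fn_eq_zero_of_lt_one (n : ℕ) {x : ℝ} (hx0 : 0 ≤ x) (hx1 : x < 1) : fn n x = 0 := by
  rw [fn_eq_floor_sums, sum_Icc_moebius_mul_floor_div_of_lt_one n hx0 hx1,
    sum_Icc_moebius_mul_floor_div_of_lt_one n (by linarith) (by linarith)]
  simp

theorem fn_eq_one_of_lt_two {n : ℕ} (hn : 1 ≤ n) {x : ℝ} (hx1 : 1 ≤ x) (hx2 : x < 2) :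
    fn n x = 1 := by
  have : (1 : ℝ) ≤ n := by exact_mod_cast hn
  rw [fn_eq_floor_sums, sum_Icc_moebius_mul_floor_div hx1 (by linarith),
    sum_Icc_moebius_mul_floor_div_of_lt_one n (by linarith) (by linarith)]
  simp

theorem fn_eq_neg_one {n : ℕ} {x : ℝ} (hx2 : 2 ≤ x) (hxn : x < n + 1) : fn n x = -1 := by
  rw [fn_eq_floor_sums, sum_Icc_moebius_mul_floor_div (by linarith) hxn,
    sum_Icc_moebius_mul_floor_div (by linarith) (by linarith)]
  norm_num

theorem abs_fn_le (n : ℕ) (x : ℝ) : |fn n x| ≤ n := by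
  calc |fn n x| ≤ ∑ k ∈ Icc 1 n, |(μ k : ℝ) * nu (x / k)| := abs_sum_le_sum_abs _ _
    _ ≤ ∑ k ∈ Icc 1 n, 1 := by
      refine sum_le_sum fun k _ => ?_
      have hμ : |(μ k : ℝ)| ≤ 1 := by exact_mod_cast abs_moebius_le_one
      rw [abs_mul]
      exact mul_le_one₀ hμ (abs_nonneg _) (abs_nu_le_one _)
    _ = n := by simp

section CpowIntegrals

variable {s : ℂ}

theorem integrableOn_Ioi_cpow_neg_sub_one_mul (hs : 0 < s.re) {c : ℝ} (hc : 0 < c) {f : ℝ → ℂ}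
    (hf : AEStronglyMeasurable f (volume.restrict (Ioi c))) {C : ℝ}
    (hfC : ∀ x ∈ Ioi c, ‖f x‖ ≤ C) :
    IntegrableOn (fun x : ℝ => (x : ℂ) ^ (-s - 1) * f x) (Ioi c) :=
  (integrableOn_Ioi_cpow_of_lt (by simp; linarith) hc).mul_bdd hf
    ((ae_restrict_iff' measurableSet_Ioi).mpr (Filter.Eventually.of_forall hfC))

theorem norm_integral_Ioi_cpow_neg_sub_one_mul_le (hs : 0 < s.re) {c : ℝ} (hc : 0 < c)
    {f : ℝ → ℂ} {C : ℝ} (hfC : ∀ x ∈ Ioi c, ‖f x‖ ≤ C) :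
    ‖∫ x in Ioi c, (x : ℂ) ^ (-s - 1) * f x‖ ≤ C * c ^ (-s.re) / s.re := by
  have hσ : -s.re - 1 < -1 := by linarith
  calc ‖∫ x in Ioi c, (x : ℂ) ^ (-s - 1) * f x‖ ≤ ∫ x in Ioi c, C * x ^ (-s.re - 1) := by
        refine norm_integral_le_of_norm_le ((integrableOn_Ioi_rpow_of_lt hσ hc).const_mul C) ?_
        refine (ae_restrict_iff' measurableSet_Ioi).mpr <|
          Filter.Eventually.of_forall fun x hx => ?_
        rw [norm_mul, Complex.norm_cpow_eq_rpow_re_of_pos (hc.trans hx), mul_comm]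
        simp only [Complex.sub_re, Complex.neg_re, Complex.one_re]
        exact mul_le_mul_of_nonneg_right (hfC x hx) (Real.rpow_nonneg (hc.trans hx).le _)
    _ = C * c ^ (-s.re) / s.re := by
        rw [integral_const_mul, integral_Ioi_rpow_of_lt hσ hc, sub_add_cancel, neg_div_neg_eq,
          mul_div_assoc]

theorem integral_Ioi_cpow_neg_sub_one (hs : 0 < s.re) {c : ℝ} (hc : 0 < c) :
    ∫ x in Ioi c, (x : ℂ) ^ (-s - 1) = (c : ℂ) ^ (-s) / s := by
  rw [integral_Ioi_cpow_of_lt (by simp; linarith) hc, sub_add_cancel, neg_div_neg_eq]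

theorem intervalIntegral_cpow_neg_sub_one (hs : 0 < s.re) {a b : ℝ} (ha : 0 < a) (hab : a ≤ b) :
    ∫ x in a..b, (x : ℂ) ^ (-s - 1) = ((a : ℂ) ^ (-s) - (b : ℂ) ^ (-s)) / s := by
  have hs0 : s ≠ 0 := fun h => by simp [h] at hs
  rw [integral_cpow (Or.inr ⟨by simpa using hs0, by
    rw [uIcc_of_le hab]; exact fun h => (ha.trans_le h.1).false⟩), sub_add_cancel]
  field_simp
  ring

end CpowIntegrals

section Mellin

variable {E : Type*} [NormedAddCommGroup E] [NormedSpace ℂ E] {s : ℂ}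

theorem HasMellin.comp_mul_left {f : ℝ → E} {m : E} (hf : HasMellin f s m) {a : ℝ}
    (ha : 0 < a) :
    HasMellin (fun t => f (a * t)) s ((a : ℂ) ^ (-s) • m) :=
  ⟨(MellinConvergent.comp_mul_left ha).mpr hf.1, by rw [mellin_comp_mul_left _ _ ha, hf.2]⟩

theorem hasMellin_sum {ι : Type*} (t : Finset ι) {f : ι → ℝ → E} {m : ι → E}
    (hf : ∀ i ∈ t, HasMellin (f i) s (m i)) :
    HasMellin (fun x => ∑ i ∈ t, f i x) s (∑ i ∈ t, m i) := by
  refine ⟨?_, ?_⟩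
  · simp only [MellinConvergent, smul_sum]
    exact integrable_finsetSum t fun i hi => (hf i hi).1
  · simp only [mellin, smul_sum]
    rw [integral_finsetSum t fun i hi => (hf i hi).1]
    exact sum_congr rfl fun i hi => (hf i hi).2

theorem mellin_eq_setIntegral_Ioi_of_eqOn_zero {f : ℝ → E} {a : ℝ} (ha : 0 < a)
    (hf : EqOn f 0 (Ioo 0 a)) : mellin f s = ∫ t in Ioi a, (t : ℂ) ^ (s - 1) • f t := by
  rw [mellin, setIntegral_eq_of_subset_of_forall_sdiff_eq_zero measurableSet_Ioi
    (Ici_subset_Ioi.mpr ha) fun t ht => ?_, setIntegral_congr_set Ioi_ae_eq_Ici]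
  rw [hf ⟨ht.1, not_le.mp ht.2⟩, Pi.zero_apply, smul_zero]

end Mellin

theorem pairwise_disjoint_Ico_two_mul_add_one :
    Pairwise (Function.onFun Disjoint fun k : ℕ => Ico (2 * k + 1 : ℝ) (2 * k + 2)) := by
  intro i j hij
  refine Set.disjoint_left.mpr fun x hi hj => hij ?_
  have hfloor (k : ℕ) (hk : x ∈ Ico (2 * k + 1 : ℝ) (2 * k + 2)) : ⌊x⌋ = 2 * k + 1 :=
    Int.floor_eq_iff.mpr (by push_cast; constructor <;> linarith [hk.1, hk.2])
  have := (hfloor i hi).symm.trans (hfloor j hj)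
  omega

theorem hasMellin_nu {s : ℂ} (hs : 0 < s.re) :
    HasMellin (fun x => (nu x : ℂ)) (-s) (eta s / s) := by
  set U := ⋃ k : ℕ, Ico (2 * k + 1 : ℝ) (2 * k + 2)
  have hU : MeasurableSet U := MeasurableSet.iUnion fun k => measurableSet_Ico
  have hU1 : U ⊆ Ioi (1 / 2) := by
    simp only [U, iUnion_subset_iff]
    intro k x hx
    simp only [Set.mem_Ioi]
    linarith [hx.1, (Nat.cast_nonneg k : (0 : ℝ) ≤ k)]
  have hint : IntegrableOn (fun x : ℝ => (x : ℂ) ^ (-s - 1)) U :=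
    (integrableOn_Ioi_cpow_of_lt (by simp; linarith) one_half_pos).mono_set hU1
  have heq : EqOn (fun x : ℝ => (x : ℂ) ^ (-s - 1) • (nu x : ℂ))
      (U.indicator fun x => (x : ℂ) ^ (-s - 1)) (Ioi 0) := fun x hx => by
    have hnu : nu x = U.indicator 1 x := nu_eq_indicator (le_of_lt hx)
    by_cases h : x ∈ U <;> simp [hnu, h]
  refine ⟨(integrableOn_congr_fun heq measurableSet_Ioi).mpr
    ((integrable_indicator_iff hU).mpr hint).integrableOn, ?_⟩
  rw [mellin, setIntegral_congr_fun measurableSet_Ioi heq, setIntegral_indicator hU,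
    inter_eq_right.mpr (hU1.trans (Ioi_subset_Ioi one_half_pos.le)),
    integral_iUnion (fun k => measurableSet_Ico) pairwise_disjoint_Ico_two_mul_add_one hint, eta,
    ← tsum_div_const]
  refine tsum_congr fun k => ?_
  rw [integral_Ico_eq_integral_Ioc, ← intervalIntegral.integral_of_le (by linarith),
    intervalIntegral_cpow_neg_sub_one hs (by positivity) (by linarith)]
  push_cast
  ring_nf

theorem hasMellin_fn {s : ℂ} (hs : 0 < s.re) (n : ℕ) :
    HasMellin (fun x => (fn n x : ℂ)) (-s)
      ((∑ k ∈ Finset.Icc 1 n, (μ k : ℂ) * (k : ℂ) ^ (-s)) * (eta s / s)) := by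
  have hterm (k : ℕ) (hk : k ∈ Finset.Icc 1 n) :
      HasMellin (fun x => (μ k : ℂ) • (nu ((k : ℝ)⁻¹ * x) : ℂ)) (-s)
        ((μ k : ℂ) * (k : ℂ) ^ (-s) * (eta s / s)) := by
    have hk : (0 : ℝ) < (k : ℝ)⁻¹ := inv_pos.mpr (by exact_mod_cast (Finset.mem_Icc.mp hk).1)
    have hscaled := (hasMellin_nu hs).comp_mul_left hk
    refine ⟨hscaled.1.const_smul _, ?_⟩
    rw [(hasMellin_const_smul hscaled.1 (μ k : ℂ)).2, hscaled.2, neg_neg, Complex.ofReal_inv,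
      Complex.inv_cpow _ _ (by simp [Complex.natCast_arg, Real.pi_ne_zero.symm]),
      ← Complex.cpow_neg]
    simp only [smul_eq_mul, Complex.ofReal_natCast, mul_assoc]
  rw [sum_mul]
  convert hasMellin_sum _ hterm using 2 with x
  simp [fn, div_eq_inv_mul]

theorem abs_one_add_fn_le (n : ℕ) (x : ℝ) : |1 + fn n x| ≤ 1 + n :=
  (abs_add_le _ _).trans (by rw [abs_one]; linarith [abs_fn_le n x])

theorem integrableOn_Ioi_cpow_mul_one_add_fn {s : ℂ} (hs : 0 < s.re) (n : ℕ) {c : ℝ}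
    (hc : 0 < c) :
    IntegrableOn (fun x : ℝ => (x : ℂ) ^ (-s - 1) * ((1 + fn n x : ℝ) : ℂ)) (Ioi c) :=
  integrableOn_Ioi_cpow_neg_sub_one_mul hs hc
    (Complex.measurable_ofReal.comp (measurable_const.add (measurable_fn n))).aestronglyMeasurable
    fun x _ => by rw [Complex.norm_real, Real.norm_eq_abs]; exact abs_one_add_fn_le n x

theorem mellin_fn_eq_integral_Ioi_one_sub {s : ℂ} (hs : 0 < s.re) (n : ℕ) :
    mellin (fun x => (fn n x : ℂ)) (-s) =
      (∫ x in Ioi (1 : ℝ), (x : ℂ) ^ (-s - 1) * ((1 + fn n x : ℝ) : ℂ)) - 1 / s := by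
  have hcpow : IntegrableOn (fun x : ℝ => (x : ℂ) ^ (-s - 1)) (Ioi 1) :=
    integrableOn_Ioi_cpow_of_lt (by simp; linarith) one_pos
  have hfn : IntegrableOn (fun x : ℝ => (x : ℂ) ^ (-s - 1) * (fn n x : ℂ)) (Ioi 1) :=
    (hasMellin_fn hs n).1.mono_set (Ioi_subset_Ioi zero_le_one)
  rw [mellin_eq_setIntegral_Ioi_of_eqOn_zero one_pos
    (fun x hx => by simp [fn_eq_zero_of_lt_one n hx.1.le hx.2]), eq_sub_iff_add_eq]
  simp only [Complex.ofReal_add, Complex.ofReal_one, mul_add, mul_one]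
  rw [integral_add hcpow hfn, integral_Ioi_cpow_neg_sub_one hs one_pos]
  simp [add_comm]

theorem mellin_fn_eq_add_integral_Ioi {s : ℂ} (hs : 0 < s.re) {n : ℕ} (hn : 1 ≤ n) :
    mellin (fun x => (fn n x : ℂ)) (-s) = (1 - 2 ^ (1 - s)) / s +
      ∫ x in Ioi ((n : ℝ) + 1), (x : ℂ) ^ (-s - 1) * ((1 + fn n x : ℝ) : ℂ) := by
  set g : ℝ → ℂ := fun x => (x : ℂ) ^ (-s - 1) * ((1 + fn n x : ℝ) : ℂ)
  have hT : (2 : ℝ) ≤ n + 1 := by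
    have : (1 : ℝ) ≤ n := by exact_mod_cast hn
    linarith
  have hg (c : ℝ) (hc : 0 < c) : IntegrableOn g (Ioi c) :=
    integrableOn_Ioi_cpow_mul_one_add_fn hs n hc
  have hg' {a b : ℝ} (ha : 1 ≤ a) (hab : a ≤ b) : IntervalIntegrable g volume a b :=
    (intervalIntegrable_iff_integrableOn_Ioc_of_le hab).mpr
      ((hg 1 one_pos).mono_set fun x hx => lt_of_le_of_lt ha hx.1)
  have h12 : ∫ x in (1 : ℝ)..2, g x = 2 * ((1 - 2 ^ (-s)) / s) := by
    rw [intervalIntegral.integral_congr_Ioo_of_le one_le_two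
      (g := fun x => 2 * (x : ℂ) ^ (-s - 1)) fun x hx => ?_]
    · rw [intervalIntegral.integral_const_mul,
        intervalIntegral_cpow_neg_sub_one hs one_pos one_le_two]
      simp
    · simp only [g, fn_eq_one_of_lt_two hn hx.1.le hx.2]
      push_cast
      ring
  have h2T : ∫ x in (2 : ℝ)..(n + 1), g x = 0 := by
    rw [intervalIntegral.integral_congr_Ioo_of_le hT (g := fun _ => 0) fun x hx => ?_]
    · simp
    · simp [g, fn_eq_neg_one hx.1.le hx.2]
  rw [mellin_fn_eq_integral_Ioi_one_sub hs n,
    ← intervalIntegral.integral_interval_add_Ioi (hg 1 one_pos) (hg (n + 1) (by linarith)),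
    ← intervalIntegral.integral_add_adjacent_intervals (hg' le_rfl one_le_two) (hg' one_le_two hT),
    h12, h2T, Complex.cpow_sub _ _ two_ne_zero, Complex.cpow_one, Complex.cpow_neg]
  field_simp
  ring

theorem stmt_14 : ∀ n : ℕ, 0 < n → ∀ σ : ℝ, 0 < σ → ∀ s : ℂ, s.re = σ →
    ‖(eta s / s) * (∑ k ∈ Finset.Icc 1 n, (ArithmeticFunction.moebius k : ℂ) / (k : ℂ) ^ s) -
        (1 - 2 ^ (1 - s)) / s‖ ≤
      (⨆ x : {x : ℝ // (n : ℝ) ≤ x}, |1 + fn n x|) / (σ * (n : ℝ) ^ σ) := by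
  intro n hn σ hσ s hs
  subst hs
  set C := ⨆ x : {x : ℝ // (n : ℝ) ≤ x}, |1 + fn n x|
  have hn' : (0 : ℝ) < n := by exact_mod_cast hn
  have hC (x : ℝ) (hx : x ∈ Ioi ((n : ℝ) + 1)) : ‖((1 + fn n x : ℝ) : ℂ)‖ ≤ C := by
    rw [Complex.norm_real, Real.norm_eq_abs]
    have hbdd : BddAbove (range fun x : {x : ℝ // (n : ℝ) ≤ x} => |1 + fn n x|) :=
      ⟨1 + n, by rintro _ ⟨y, rfl⟩; exact abs_one_add_fn_le n y⟩
    exact le_ciSup hbdd ⟨x, by linarith [hx.out]⟩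
  have htail := (hasMellin_fn hσ n).2
  rw [mellin_fn_eq_add_integral_Ioi hσ hn] at htail
  have hsum : ∑ k ∈ Finset.Icc 1 n, (μ k : ℂ) / (k : ℂ) ^ s =
      ∑ k ∈ Finset.Icc 1 n, (μ k : ℂ) * (k : ℂ) ^ (-s) :=
    sum_congr rfl fun k _ => by rw [Complex.cpow_neg, div_eq_mul_inv]
  rw [hsum, mul_comm, ← htail, add_sub_cancel_left]
  calc _ ≤ C * ((n : ℝ) + 1) ^ (-s.re) / s.re :=
        norm_integral_Ioi_cpow_neg_sub_one_mul_le hσ (by positivity) hC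
    _ ≤ C * (n : ℝ) ^ (-s.re) / s.re := by
        have hC0 : 0 ≤ C := Real.iSup_nonneg fun _ => abs_nonneg _
        have hpow : ((n : ℝ) + 1) ^ (-s.re) ≤ (n : ℝ) ^ (-s.re) :=
          Real.rpow_le_rpow_of_nonpos hn' (by linarith) (by linarith)
        exact div_le_div_of_nonneg_right (mul_le_mul_of_nonneg_left hpow hC0) hσ.le
    _ = C / (s.re * (n : ℝ) ^ s.re) := by
        rw [Real.rpow_neg hn'.le]
        field_simp
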